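/- Let m ≥ 1 and consider the polynomial ring ℚ[x₁,…,x_m,y₁,y₂]. Let S be the ℚ-subalgebra generated by all differences y_j − x_i (i = 1,…,m, j = 1,2) and all differences y₂ − y₁, y₁ − y₂, x_j − x_i, and let τ be the ℚ-algebra automorphism exchanging y₁ and y₂ and fixing each xᵢ. Set Xᵢ = (y₁+y₂)/2 − xᵢ for i = 1,…,m and Y = (y₁+y₂)²/4 − y₁y₂. Then the subring {f ∈ S : τ(f) = f} of τ-invariant elements of S equals the ℚ-subalgebra generated by X₁,…,X_m,Y, and the family (X₁,…,X_m,Y) is algebraically independent over ℚ. -/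

import Mathlib

open MvPolynomial

noncomputable section

/-- The variable xᵢ in ℚ[x₁,…,x_m,y₁,y₂]. -/
def xv (m : ℕ) (i : Fin m) : MvPolynomial (Fin m ⊕ Fin 2) ℚ := X (Sum.inl i)

/-- The variable y_j in ℚ[x₁,…,x_m,y₁,y₂]. -/
def yv (m : ℕ) (j : Fin 2) : MvPolynomial (Fin m ⊕ Fin 2) ℚ := X (Sum.inr j)

/-- Xᵢ = (y₁+y₂)/2 − xᵢ. -/
def Xg (m : ℕ) (i : Fin m) : MvPolynomial (Fin m ⊕ Fin 2) ℚ :=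
  C (1 / 2 : ℚ) * (yv m 0 + yv m 1) - xv m i

/-- Y = (y₁+y₂)²/4 − y₁y₂. -/
def Yg (m : ℕ) : MvPolynomial (Fin m ⊕ Fin 2) ℚ :=
  C (1 / 4 : ℚ) * (yv m 0 + yv m 1) ^ 2 - yv m 0 * yv m 1

/-- The ℚ-subalgebra S generated by the differences y_j − xᵢ, y₂ − y₁, y₁ − y₂
and x_j − xᵢ. -/
def Ssub (m : ℕ) : Subalgebra ℚ (MvPolynomial (Fin m ⊕ Fin 2) ℚ) :=
  Algebra.adjoin ℚ
    ({f | ∃ (i : Fin m) (j : Fin 2), f = yv m j - xv m i} ∪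
      {yv m 1 - yv m 0, yv m 0 - yv m 1} ∪
      {f | ∃ i j : Fin m, f = xv m j - xv m i})

/-- The automorphism τ exchanging y₁ and y₂ and fixing each xᵢ. -/
def tau (m : ℕ) : MvPolynomial (Fin m ⊕ Fin 2) ℚ ≃ₐ[ℚ] MvPolynomial (Fin m ⊕ Fin 2) ℚ :=
  renameEquiv ℚ (Equiv.sumCongr (Equiv.refl (Fin m)) (Equiv.swap 0 1))

/-! In the coordinates `Xᵢ`, `b = (y₁ - y₂)/2`, `c = (y₁ + y₂)/2` of `ℚ[x, y]`, every generator of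
`S` is a polynomial in the `Xᵢ` and `b`, while `τ` fixes the `Xᵢ` and `c` and sends `b` to `-b`.
Hence a `τ`-invariant element of `S` is a polynomial in the `Xᵢ` and `b` that is even in `b`, that
is, a polynomial in the `Xᵢ` and `b² = Y`. Algebraic independence of `(Xᵢ, Y)` follows from that of
the coordinates `(Xᵢ, b, c)`, since `b²` is transcendental over `ℚ[X]` whenever `b` is. -/

namespace MvPolynomial

variable {σ R : Type*} [CommRing R] [DecidableEq σ]

def negateVar (s : σ) : MvPolynomial σ R →ₐ[R] MvPolynomial σ R :=
  aeval (Function.update X s (-X s))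

theorem negateVar_monomial (s : σ) (d : σ →₀ ℕ) (c : R) :
    negateVar s (monomial d c) = monomial d ((-1) ^ d s * c) := by
  have hfactor : ∀ v, Function.update X s (-X s) v ^ d v
      = (if v = s then (-1) ^ d v else 1) * (X v : MvPolynomial σ R) ^ d v := by
    intro v
    by_cases hv : v = s
    · subst hv; rw [Function.update_self, neg_pow, if_pos rfl]
    · simp [hv]
  rw [negateVar, aeval_monomial, monomial_eq, Finsupp.prod, Finsupp.prod,
    Finset.prod_congr rfl fun v _ => hfactor v, Finset.prod_mul_distrib, Finset.prod_ite_eq']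
  split_ifs with hs
  · simp [C_mul, mul_assoc, mul_left_comm]
  · simp [Finsupp.notMem_support_iff.1 hs]

theorem coeff_negateVar (s : σ) (g : MvPolynomial σ R) (d : σ →₀ ℕ) :
    coeff d (negateVar s g) = (-1) ^ d s * coeff d g := by
  induction g using MvPolynomial.induction_on' with
  | monomial e c =>
    rw [negateVar_monomial, coeff_monomial, coeff_monomial]
    split_ifs with h <;> simp [h]
  | add p q hp hq => simp [hp, hq, mul_add]

theorem even_of_negateVar_eq [NoZeroDivisors R] [CharZero R] {s : σ} {g : MvPolynomial σ R}
    (hg : negateVar s g = g) {d : σ →₀ ℕ} (hd : d ∈ g.support) : Even (d s) := by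
  by_contra hodd
  have hcoeff := coeff_negateVar s g d
  rw [hg, (Nat.not_even_iff_odd.1 hodd).neg_one_pow, neg_one_mul, eq_comm,
    CharZero.neg_eq_self_iff] at hcoeff
  exact mem_support_iff.1 hd hcoeff

theorem mem_adjoin_X_sq_of_negateVar_eq [NoZeroDivisors R] [CharZero R] {s : σ} {T : Set σ}
    {g : MvPolynomial σ R} (hT : g ∈ supported R T) (hg : negateVar s g = g) :
    g ∈ Algebra.adjoin R (X '' (T \ {s}) ∪ {X s ^ 2}) := by
  rw [g.as_sum]
  refine Subalgebra.sum_mem _ fun d hd => ?_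
  rw [monomial_eq, Finsupp.prod]
  refine mul_mem (Subalgebra.algebraMap_mem _ _) (Subalgebra.prod_mem _ fun v hv => ?_)
  have hvT : v ∈ T := mem_supported.1 hT ((mem_vars_iff_mem_support v).2 ⟨d, hd, hv⟩)
  by_cases hvs : v = s
  · subst hvs
    obtain ⟨k, hk⟩ := even_of_negateVar_eq hg hd
    rw [hk, ← two_mul, pow_mul]
    have hsq : (X v ^ 2 : MvPolynomial σ R) ∈ X '' (T \ {v}) ∪ {X v ^ 2} :=
      Set.mem_union_right _ rfl
    exact pow_mem (Algebra.subset_adjoin hsq) _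
  · have hX : (X v : MvPolynomial σ R) ∈ X '' (T \ {s}) ∪ {X s ^ 2} :=
      Set.mem_union_left _ ⟨v, ⟨hvT, hvs⟩, rfl⟩
    exact pow_mem (Algebra.subset_adjoin hX) _

end MvPolynomial

def halfDiff (m : ℕ) : MvPolynomial (Fin m ⊕ Fin 2) ℚ := C (1 / 2 : ℚ) * (yv m 0 - yv m 1)

def halfSum (m : ℕ) : MvPolynomial (Fin m ⊕ Fin 2) ℚ := C (1 / 2 : ℚ) * (yv m 0 + yv m 1)

def coords (m : ℕ) : Fin m ⊕ Fin 2 → MvPolynomial (Fin m ⊕ Fin 2) ℚ :=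
  Sum.elim (Xg m) ![halfDiff m, halfSum m]

theorem algebraicIndependent_coords (m : ℕ) : AlgebraicIndependent ℚ (coords m) := by
  let inv : MvPolynomial (Fin m ⊕ Fin 2) ℚ →ₐ[ℚ] MvPolynomial (Fin m ⊕ Fin 2) ℚ :=
    aeval (Sum.elim (fun i => yv m 1 - xv m i) ![yv m 1 + yv m 0, yv m 1 - yv m 0])
  have hinv : inv.comp (aeval (coords m)) = AlgHom.id ℚ _ := by
    refine algHom_ext fun v => ?_
    rcases v with i | j
    on_goal 2 => fin_cases j
    all_goals
      simp only [AlgHom.comp_apply, AlgHom.id_apply, aeval_X, coords, Sum.elim_inl, Sum.elim_inr,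
        Fin.zero_eta, Fin.mk_one, Matrix.cons_val_zero, Matrix.cons_val_one, Matrix.cons_val_fin_one,
        Xg, halfDiff, halfSum, C_mul', xv, yv, map_add, map_sub, map_smul, inv]
      module
  rw [algebraicIndependent_iff_injective_aeval]
  exact Function.LeftInverse.injective fun p => by simpa using DFunLike.congr_fun hinv p

theorem tau_xv (m : ℕ) (i : Fin m) : tau m (xv m i) = xv m i := by
  simp [tau, xv, Equiv.swap_apply_of_ne_of_ne]

theorem tau_yv_zero (m : ℕ) : tau m (yv m 0) = yv m 1 := by
  simp [tau, yv]

theorem tau_yv_one (m : ℕ) : tau m (yv m 1) = yv m 0 := by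
  simp [tau, yv]

theorem tau_Xg (m : ℕ) (i : Fin m) : tau m (Xg m i) = Xg m i := by
  rw [Xg, C_mul', map_sub, map_smul, map_add, tau_yv_zero, tau_yv_one, tau_xv, add_comm (yv m 1)]

theorem tau_halfDiff (m : ℕ) : tau m (halfDiff m) = -halfDiff m := by
  rw [halfDiff, C_mul', map_smul, map_sub, tau_yv_zero, tau_yv_one, ← smul_neg, neg_sub]

theorem tau_halfSum (m : ℕ) : tau m (halfSum m) = halfSum m := by
  rw [halfSum, C_mul', map_smul, map_add, tau_yv_zero, tau_yv_one, add_comm (yv m 1)]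

theorem Yg_eq_halfDiff_sq (m : ℕ) : Yg m = halfDiff m ^ 2 := by
  have hquarter : (C (1 / 4 : ℚ) : MvPolynomial (Fin m ⊕ Fin 2) ℚ) * 4 = 1 := by
    rw [← map_ofNat C 4, ← C_mul]; norm_num
  rw [Yg, halfDiff, mul_pow, ← C_pow]
  norm_num
  linear_combination (yv m 0 * yv m 1) * hquarter

theorem tau_Yg (m : ℕ) : tau m (Yg m) = Yg m := by
  rw [Yg_eq_halfDiff_sq, map_pow, tau_halfDiff, neg_sq]

theorem tau_comp_aeval_coords (m : ℕ) :
    (tau m).toAlgHom.comp (aeval (coords m)) = (aeval (coords m)).comp (negateVar (Sum.inr 0)) := by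
  refine algHom_ext fun v => ?_
  rcases v with i | j
  · simp [coords, negateVar, tau_Xg]
  · fin_cases j
    · simp [coords, negateVar, tau_halfDiff]
    · simp [coords, negateVar, tau_halfSum]

theorem yv_sub_xv_mem_Ssub (m : ℕ) (i : Fin m) (j : Fin 2) : yv m j - xv m i ∈ Ssub m :=
  Algebra.subset_adjoin (Or.inl (Or.inl ⟨i, j, rfl⟩))

theorem yv_zero_sub_yv_one_mem_Ssub (m : ℕ) : yv m 0 - yv m 1 ∈ Ssub m :=
  Algebra.subset_adjoin (Or.inl (Or.inr (Or.inr rfl)))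

theorem Xg_mem_Ssub (m : ℕ) (i : Fin m) : Xg m i ∈ Ssub m := by
  have hXg : Xg m i = (1 / 2 : ℚ) • ((yv m 0 - xv m i) + (yv m 1 - xv m i)) := by
    rw [Xg, C_mul']; module
  rw [hXg]
  exact Subalgebra.smul_mem _ (add_mem (yv_sub_xv_mem_Ssub m i 0) (yv_sub_xv_mem_Ssub m i 1)) _

theorem Yg_mem_Ssub (m : ℕ) : Yg m ∈ Ssub m := by
  rw [Yg_eq_halfDiff_sq, halfDiff, C_mul']
  exact pow_mem (Subalgebra.smul_mem _ (yv_zero_sub_yv_one_mem_Ssub m) _) 2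

theorem Ssub_le_map_supported (m : ℕ) :
    Ssub m ≤ (supported ℚ {Sum.inr 1}ᶜ).map (aeval (coords m)) := by
  have hcoords : ∀ v : Fin m ⊕ Fin 2, v ≠ Sum.inr 1 →
      coords m v ∈ (supported ℚ {Sum.inr 1}ᶜ).map (aeval (coords m)) :=
    fun v hv => Subalgebra.mem_map.2 ⟨X v, X_mem_supported.2 hv, aeval_X _ _⟩
  have hXg (i : Fin m) := hcoords (Sum.inl i) Sum.inl_ne_inr
  have hb := hcoords (Sum.inr 0) (by simp)
  refine Algebra.adjoin_le fun p hp => SetLike.mem_coe.2 ?_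
  rcases hp with (⟨i, j, rfl⟩ | (rfl | rfl)) | ⟨i, j, rfl⟩
  · fin_cases j
    · convert add_mem (hXg i) hb using 1
      simp only [Fin.zero_eta, coords, Sum.elim_inl, Sum.elim_inr, Matrix.cons_val_zero, Xg, halfDiff,
        C_mul']
      module
    · convert sub_mem (hXg i) hb using 1
      simp only [Fin.mk_one, coords, Sum.elim_inl, Sum.elim_inr, Matrix.cons_val_zero, Xg, halfDiff,
        C_mul']
      module
  · convert neg_mem (add_mem hb hb) using 1
    simp only [coords, Sum.elim_inr, Matrix.cons_val_zero, halfDiff, C_mul']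
    module
  · convert add_mem hb hb using 1
    simp only [coords, Sum.elim_inr, Matrix.cons_val_zero, halfDiff, C_mul']
    module
  · convert sub_mem (hXg i) (hXg j) using 1
    simp only [coords, Sum.elim_inl, Xg]
    abel

theorem mem_adjoin_Xg_Yg_of_tau_eq (m : ℕ) {f : MvPolynomial (Fin m ⊕ Fin 2) ℚ}
    (hf : f ∈ Ssub m) (hτ : tau m f = f) :
    f ∈ Algebra.adjoin ℚ (Set.range (Xg m) ∪ {Yg m}) := by
  obtain ⟨g, hg, rfl⟩ := Subalgebra.mem_map.1 (Ssub_le_map_supported m hf)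
  have hneg : negateVar (Sum.inr 0) g = g := by
    refine algebraicIndependent_iff_injective_aeval.1 (algebraicIndependent_coords m) ?_
    simpa using (DFunLike.congr_fun (tau_comp_aeval_coords m) g).symm.trans hτ
  have hmem : aeval (coords m) g ∈ (Algebra.adjoin ℚ
      (X '' ({Sum.inr 1}ᶜ \ {Sum.inr 0}) ∪ {X (Sum.inr 0) ^ 2})).map (aeval (coords m)) :=
    Subalgebra.mem_map.2 ⟨g, mem_adjoin_X_sq_of_negateVar_eq hg hneg, rfl⟩
  rw [AlgHom.map_adjoin] at hmem
  refine Algebra.adjoin_mono ?_ hmem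
  rintro _ ⟨_, ⟨v, ⟨hv1, hv0⟩, rfl⟩ | rfl, rfl⟩
  · rcases v with i | j
    · exact Or.inl ⟨i, by simp [coords]⟩
    · fin_cases j <;> simp_all
  · exact Or.inr (by simp [coords, Yg_eq_halfDiff_sq])

theorem tau_eq_self_of_mem_adjoin_Xg_Yg (m : ℕ) {f : MvPolynomial (Fin m ⊕ Fin 2) ℚ}
    (hf : f ∈ Algebra.adjoin ℚ (Set.range (Xg m) ∪ {Yg m})) : tau m f = f := by
  have hle : Algebra.adjoin ℚ (Set.range (Xg m) ∪ {Yg m}) ≤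
      AlgHom.equalizer (tau m).toAlgHom (AlgHom.id ℚ _) := by
    refine Algebra.adjoin_le ?_
    rintro _ (⟨i, rfl⟩ | rfl)
    exacts [tau_Xg m i, tau_Yg m]
  exact hle hf

theorem adjoin_Xg_Yg_le_Ssub (m : ℕ) : Algebra.adjoin ℚ (Set.range (Xg m) ∪ {Yg m}) ≤ Ssub m := by
  refine Algebra.adjoin_le ?_
  rintro _ (⟨i, rfl⟩ | rfl)
  exacts [Xg_mem_Ssub m i, Yg_mem_Ssub m]

theorem algebraicIndependent_Xg_Yg (m : ℕ) :
    AlgebraicIndependent ℚ (fun o : Option (Fin m) => o.elim (Yg m) (Xg m)) := by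
  have hcomp := (algebraicIndependent_coords m).comp (fun o : Option (Fin m) =>
    o.elim (Sum.inr 0) Sum.inl) (by rintro (_ | _) (_ | _) h <;> simp_all)
  have hdiff : AlgebraicIndependent ℚ (fun o : Option (Fin m) => o.elim (halfDiff m) (Xg m)) := by
    convert hcomp using 1
    funext o
    cases o <;> rfl
  obtain ⟨hXg, htrans⟩ := AlgebraicIndependent.option_iff.1 hdiff
  rw [Yg_eq_halfDiff_sq]
  exact AlgebraicIndependent.option_iff.2 ⟨hXg, htrans.pow two_pos⟩

theorem stmt5 (m : ℕ) :
    (∀ f : MvPolynomial (Fin m ⊕ Fin 2) ℚ,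
      (f ∈ Ssub m ∧ tau m f = f) ↔
        f ∈ Algebra.adjoin ℚ (Set.range (Xg m) ∪ {Yg m})) ∧
    AlgebraicIndependent ℚ (fun o : Option (Fin m) => o.elim (Yg m) (Xg m)) :=
  ⟨fun _ => ⟨fun ⟨hf, hτ⟩ => mem_adjoin_Xg_Yg_of_tau_eq m hf hτ,
    fun hf => ⟨adjoin_Xg_Yg_le_Ssub m hf, tau_eq_self_of_mem_adjoin_Xg_Yg m hf⟩⟩,
    algebraicIndependent_Xg_Yg m⟩

end
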